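/- Let g: D_{m,1} → ℕ be the ℓ=1 D-LOCO encoding-decoding rule. Then g is a bijection from D_{m,1} onto {0, 1, ..., 4·3^(m-1) - 1}, and g is strictly increasing with respect to the lexicographic order on D_{m,1} (with symbol significance decreasing from left to right and A < T < G < C). -/

import Mathlib

/-!
Write `d_i = |{Δ < c_i : Δ ≠ c_{i+1}}|`, so that `g(c) = ∑ d_i 3^i`. When `c_i ≠ c_{i+1}`,
`d_i` is the rank of `c_i` among the three symbols other than `c_{i+1}`, hence a base-3 digit,
while the top digit `d_{m-1} = c_{m-1}` (because `c_m = C`) ranges over `{0,…,3}`.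

Prepending a symbol `a` to a word `w` gives `g(a w) = d + 3 g(w)`, and `a ↦ d` is a bijection
from the symbols `≠ w_0` onto `{0,1,2}`; so for `m ≥ 1`, `n` is a value of `g` on `D_{m+1,1}`
iff `⌊n/3⌋` is one on `D_{m,1}`, and induction on `m` identifies the image with
`[0, 4·3^(m-1))`.

If `c < w` lexicographically and `j` is the most significant position where they differ, then
`d_j(c) < d_j(w)`, the digits above `j` agree, and the digits of `c` below `j` contribute less
than `3^j`. This gives monotonicity and, the order being total, injectivity.
-/

/-- Extension of a word `w` in `{A,T,G,C}^m` (symbols identified with `Fin 4`,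
`A<T<G<C` corresponding to `0<1<2<3`) to all of `Nat`, with the convention that
out-of-bounds symbols are `C = 3`. Position `i` carries significance `3^i`
(significance decreases from left to right in the word `c_{m-1} ... c_0`). -/
def ext (m : ℕ) (w : Fin m → Fin 4) (i : ℕ) : Fin 4 :=
  if h : i < m then w ⟨i, h⟩ else 3

/-- The `i`-th symbol contribution for the `ℓ = 1` D-LOCO rule:
`|{Δ ∈ {0,1,2} : Δ < c_i ∧ c_{i+1} ≠ Δ}| * 3^i`. -/
def contrib (m : ℕ) (w : Fin m → Fin 4) (i : ℕ) : ℕ :=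
  (Finset.univ.filter fun Δ : Fin 4 => Δ < ext m w i ∧ ext m w (i + 1) ≠ Δ).card * 3 ^ i

/-- The (formal) index of a word under the `ℓ = 1` D-LOCO encoding-decoding rule. -/
def gidx (m : ℕ) (w : Fin m → Fin 4) : ℕ := ∑ i ∈ Finset.range m, contrib m w i

/-- Membership in `D_{m,1}`: no two adjacent equal symbols (no run of length 2). -/
def noAdj (m : ℕ) (w : Fin m → Fin 4) : Prop :=
  ∀ i : ℕ, i + 1 < m → ext m w (i + 1) ≠ ext m w i

/-- Lexicographic order on words, with symbol significance decreasing from left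
to right, i.e., increasing with the position index `i` of `c_i`. -/
def lexLt (m : ℕ) (c w : Fin m → Fin 4) : Prop :=
  ∃ j : Fin m, c j < w j ∧ ∀ k : Fin m, j < k → c k = w k

theorem lexLt_iff_toColex_lt {m : ℕ} {c w : Fin m → Fin 4} :
    lexLt m c w ↔ toColex c < toColex w :=
  exists_congr fun _ => and_comm

theorem lexLt_or_eq_or_lexLt {m : ℕ} (c w : Fin m → Fin 4) :
    lexLt m c w ∨ c = w ∨ lexLt m w c := by
  simp only [lexLt_iff_toColex_lt]
  rcases lt_trichotomy (toColex c) (toColex w) with h | h | h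
  · exact .inl h
  · exact .inr (.inl (toColex.injective h))
  · exact .inr (.inr h)

namespace Nat

theorem sum_mul_pow_lt_pow {b k : ℕ} {d : ℕ → ℕ} (hd : ∀ i < k, d i < b) :
    ∑ i ∈ Finset.range k, d i * b ^ i < b ^ k := by
  induction k with
  | zero => simp
  | succ k ih =>
    rw [Finset.sum_range_succ, pow_succ']
    have hk : d k + 1 ≤ b := hd k k.lt_succ_self
    calc ∑ i ∈ Finset.range k, d i * b ^ i + d k * b ^ k
        < b ^ k + d k * b ^ k := by gcongr; exact ih fun i hi => hd i (by omega)
      _ = (d k + 1) * b ^ k := by ring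
      _ ≤ b * b ^ k := by gcongr

theorem sum_mul_pow_lt_sum_mul_pow {b j m : ℕ} {d d' : ℕ → ℕ} (hjm : j < m)
    (hlow : ∀ i < j, d i < b) (hj : d j < d' j) (hhigh : ∀ i, j < i → d i = d' i) :
    ∑ i ∈ Finset.range m, d i * b ^ i < ∑ i ∈ Finset.range m, d' i * b ^ i := by
  induction m, hjm using Nat.le_induction with
  | base =>
    rw [Finset.sum_range_succ, Finset.sum_range_succ]
    calc ∑ i ∈ Finset.range j, d i * b ^ i + d j * b ^ j
        < b ^ j + d j * b ^ j := by gcongr; exact sum_mul_pow_lt_pow hlow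
      _ = (d j + 1) * b ^ j := by ring
      _ ≤ d' j * b ^ j := by gcongr; exact hj
      _ ≤ ∑ i ∈ Finset.range j, d' i * b ^ i + d' j * b ^ j := by omega
  | succ m hjm ih =>
    rw [Finset.sum_range_succ, Finset.sum_range_succ, hhigh m hjm]
    omega

end Nat

def digit (e c : Fin 4) : ℕ :=
  (Finset.univ.filter fun Δ : Fin 4 => Δ < c ∧ e ≠ Δ).card

theorem contrib_eq_digit (m : ℕ) (w : Fin m → Fin 4) (i : ℕ) :
    contrib m w i = digit (ext m w (i + 1)) (ext m w i) * 3 ^ i := rfl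

theorem digit_lt_three : ∀ {e c : Fin 4}, e ≠ c → digit e c < 3 := by decide

theorem digit_lt_digit : ∀ {e c c' : Fin 4}, e ≠ c → c < c' → digit e c < digit e c' := by
  decide

theorem digit_three : ∀ c : Fin 4, digit 3 c = c := by decide

theorem digit_succAbove : ∀ (e : Fin 4) (a : Fin 3), digit e (e.succAbove a) = a := by decide

section ext

variable {m : ℕ}

theorem ext_of_lt (w : Fin m → Fin 4) {i : ℕ} (h : i < m) : ext m w i = w ⟨i, h⟩ := dif_pos h

theorem ext_of_le (w : Fin m → Fin 4) {i : ℕ} (h : m ≤ i) : ext m w i = 3 := dif_neg (by omega)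

theorem ext_cons_zero (a : Fin 4) (w : Fin m → Fin 4) : ext (m + 1) (Fin.cons a w) 0 = a := rfl

theorem ext_cons_succ (a : Fin 4) (w : Fin m → Fin 4) (i : ℕ) :
    ext (m + 1) (Fin.cons a w) (i + 1) = ext m w i := by
  by_cases h : i < m
  · rw [ext_of_lt _ (by omega), ext_of_lt _ h]
    exact Fin.cons_succ (α := fun _ => Fin 4) a w ⟨i, h⟩
  · rw [ext_of_le _ (by omega), ext_of_le _ (by omega)]

end ext

theorem noAdj_cons_iff {m : ℕ} (a : Fin 4) (w : Fin m → Fin 4) :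
    noAdj (m + 1) (Fin.cons a w) ↔ (0 < m → ext m w 0 ≠ a) ∧ noAdj m w := by
  rw [noAdj, ← Nat.and_forall_add_one]
  simp only [ext_cons_zero, ext_cons_succ, Nat.add_lt_add_iff_right]
  rfl

theorem gidx_cons {m : ℕ} (a : Fin 4) (w : Fin m → Fin 4) :
    gidx (m + 1) (Fin.cons a w) = digit (ext m w 0) a + 3 * gidx m w := by
  simp only [gidx, Finset.sum_range_succ', contrib_eq_digit, ext_cons_succ, ext_cons_zero,
    pow_zero, mul_one, Finset.mul_sum]
  rw [add_comm]
  congr 1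
  refine Finset.sum_congr rfl fun i _ => ?_
  ring

theorem gidx_lt_of_lexLt {m : ℕ} {c w : Fin m → Fin 4} (hc : noAdj m c) (h : lexLt m c w) :
    gidx m c < gidx m w := by
  obtain ⟨j, hjw, hhigh⟩ := h
  have hext : ∀ i, j.val < i → ext m c i = ext m w i := by
    intro i hi
    by_cases him : i < m
    · rw [ext_of_lt c him, ext_of_lt w him]
      exact hhigh ⟨i, him⟩ hi
    · rw [ext_of_le c (by omega), ext_of_le w (by omega)]
  have hcj : ext m c (j + 1) ≠ c j := by
    by_cases hjm : j.val + 1 < m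
    · exact ext_of_lt c j.isLt ▸ hc j hjm
    · rw [ext_of_le c (by omega)]
      exact (hjw.trans_le (Fin.le_last (w j))).ne'
  refine Nat.sum_mul_pow_lt_sum_mul_pow j.isLt (fun i hi => digit_lt_three (hc i (by omega)))
    ?_ fun i hi => by rw [hext i hi, hext (i + 1) (by omega)]
  rw [← hext (j + 1) (by omega), ext_of_lt c j.isLt, ext_of_lt w j.isLt]
  exact digit_lt_digit hcj hjw

theorem gidx_one (w : Fin 1 → Fin 4) : gidx 1 w = w 0 := by
  simp [gidx, contrib_eq_digit, ext_of_le, ext_of_lt, digit_three]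

theorem noAdj_one (w : Fin 1 → Fin 4) : noAdj 1 w := fun _ h => absurd h (by omega)

theorem mem_image_gidx_succ_iff {m : ℕ} (hm : 0 < m) {n : ℕ} :
    n ∈ gidx (m + 1) '' {w | noAdj (m + 1) w} ↔ n / 3 ∈ gidx m '' {w | noAdj m w} := by
  constructor
  · rintro ⟨w, hw, rfl⟩
    cases w using Fin.consCases with | cons a w =>
    obtain ⟨ha, hw⟩ := (noAdj_cons_iff a w).1 hw
    refine ⟨w, hw, ?_⟩
    have := digit_lt_three (ha hm)
    rw [gidx_cons]
    omega
  · rintro ⟨w, hw, hq⟩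
    let a := (ext m w 0).succAbove ⟨n % 3, Nat.mod_lt _ (by norm_num)⟩
    refine ⟨Fin.cons a w, (noAdj_cons_iff a w).2 ⟨fun _ => (Fin.succAbove_ne _ _).symm, hw⟩, ?_⟩
    rw [gidx_cons, digit_succAbove, hq]
    exact Nat.mod_add_div n 3

theorem image_gidx_noAdj {m : ℕ} (hm : 1 ≤ m) :
    gidx m '' {w | noAdj m w} = Set.Iio (4 * 3 ^ (m - 1)) := by
  induction m, hm using Nat.le_induction with
  | base =>
    ext n
    simp only [Nat.sub_self, pow_zero, mul_one, Set.mem_Iio]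
    constructor
    · rintro ⟨w, -, rfl⟩
      exact gidx_one w ▸ (w 0).isLt
    · intro hn
      exact ⟨fun _ => ⟨n, hn⟩, noAdj_one _, gidx_one _⟩
  | succ m hm ih =>
    ext n
    obtain ⟨k, rfl⟩ := Nat.exists_eq_add_of_le' hm
    rw [mem_image_gidx_succ_iff hm, ih, Set.mem_Iio, Set.mem_Iio,
      Nat.div_lt_iff_lt_mul (by norm_num)]
    simp only [Nat.add_sub_cancel, pow_succ, mul_assoc]

theorem injOn_gidx_noAdj (m : ℕ) : Set.InjOn (gidx m) {w | noAdj m w} := by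
  intro c hc w hw hcw
  rcases lexLt_or_eq_or_lexLt c w with h | h | h
  · exact absurd hcw (gidx_lt_of_lexLt hc h).ne
  · exact h
  · exact absurd hcw (gidx_lt_of_lexLt hw h).ne'

/-- the `ℓ = 1` D-LOCO rule `g` is a bijection from `D_{m,1}`
onto `{0, 1, …, 4·3^(m-1) - 1}`, and it is strictly increasing with respect to
the lexicographic order on `D_{m,1}`. -/
theorem gidx_bijOn_and_strictMono (m : ℕ) (hm : 1 ≤ m) :
    Set.BijOn (gidx m) {w : Fin m → Fin 4 | noAdj m w} (Set.Iio (4 * 3 ^ (m - 1))) ∧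
    ∀ c w : Fin m → Fin 4, noAdj m c → noAdj m w → lexLt m c w →
      gidx m c < gidx m w :=
  ⟨image_gidx_noAdj hm ▸ (injOn_gidx_noAdj m).bijOn_image,
    fun _ _ hc _ => gidx_lt_of_lexLt hc⟩
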